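/- arXiv:1604.02015 — 3 statements merged into one kernel-verified Lean document; each statement's English description precedes it below -/
import Mathlib

section
/- Call a topological space locally Hausdorff if every point has an open neighbourhood that is Hausdorff in its subspace topology, and call it locally Hausdorff and locally compact if in addition every point has a compact Hausdorff neighbourhood. Let F : L → H be a groupoid fibration with fibre G (so L⁰ = G⁰). (a) If G⁰, G¹, H⁰ and H¹ are all Hausdorff, then L¹ is Hausdorff. (b) If G⁰, G¹, H⁰ and H¹ are all locally Hausdorff, then L¹ is locally Hausdorff. (c) If G⁰, G¹, H⁰ and H¹ are all locally Hausdorff and locally compact, then L⁰ and L¹ are locally Hausdorff and locally compact. -/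
/-- A topological groupoid: object space, arrow space, continuous open range and
source maps, continuous unit, inversion and (partially defined, here totalized)
multiplication maps, satisfying the usual algebraic laws on composable arrows. -/
structure TopGroupoid where
  Obj : Type
  Arr : Type
  [topObj : TopologicalSpace Obj]
  [topArr : TopologicalSpace Arr]
  r : Arr → Obj
  s : Arr → Obj
  u : Obj → Arr
  i : Arr → Arr
  m : Arr → Arr → Arr
  cont_r : Continuous r
  cont_s : Continuous s
  open_r : IsOpenMap r
  open_s : IsOpenMap s
  cont_u : Continuous u
  cont_i : Continuous i
  cont_m : Continuous (fun p : {p : Arr × Arr // s p.1 = r p.2} => m p.1.1 p.1.2)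
  r_u : ∀ x, r (u x) = x
  s_u : ∀ x, s (u x) = x
  r_m : ∀ g₁ g₂, s g₁ = r g₂ → r (m g₁ g₂) = r g₁
  s_m : ∀ g₁ g₂, s g₁ = r g₂ → s (m g₁ g₂) = s g₂
  m_assoc : ∀ g₁ g₂ g₃, s g₁ = r g₂ → s g₂ = r g₃ → m (m g₁ g₂) g₃ = m g₁ (m g₂ g₃)
  u_m : ∀ g, m (u (r g)) g = g
  m_u : ∀ g, m g (u (s g)) = g
  r_i : ∀ g, r (i g) = s g
  s_i : ∀ g, s (i g) = r g
  m_i : ∀ g, m g (i g) = u (r g)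
  i_m : ∀ g, m (i g) g = u (s g)

attribute [instance] TopGroupoid.topObj TopGroupoid.topArr

/-- A continuous functor between topological groupoids. -/
structure ContFunctor (L H : TopGroupoid) where
  obj : L.Obj → H.Obj
  arr : L.Arr → H.Arr
  cont_obj : Continuous obj
  cont_arr : Continuous arr
  r_arr : ∀ l, H.r (arr l) = obj (L.r l)
  s_arr : ∀ l, H.s (arr l) = obj (L.s l)
  u_arr : ∀ x, arr (L.u x) = H.u (obj x)
  i_arr : ∀ l, arr (L.i l) = H.i (arr l)
  m_arr : ∀ l₁ l₂, L.s l₁ = L.r l₂ → arr (L.m l₁ l₂) = H.m (arr l₁) (arr l₂)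

/-- The fibre product `H¹ ×_{s,H⁰,F⁰} L⁰` (with the subspace topology). -/
abbrev FibTarget {L H : TopGroupoid} (F : ContFunctor L H) : Type :=
  {p : H.Arr × L.Obj // H.s p.1 = F.obj p.2}

/-- The map `(F¹, s) : L¹ → H¹ ×_{s,H⁰,F⁰} L⁰`. -/
def fibMap {L H : TopGroupoid} (F : ContFunctor L H) (l : L.Arr) : FibTarget F :=
  ⟨(F.arr l, L.s l), F.s_arr l⟩

/-- A groupoid fibration: a continuous functor for which `(F¹, s)` is an open surjection. -/
def IsFibration {L H : TopGroupoid} (F : ContFunctor L H) : Prop :=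
  Function.Surjective (fibMap F) ∧ IsOpenMap (fibMap F)

/-- A groupoid covering: a continuous functor for which `(F¹, s)` is a homeomorphism. -/
def IsCovering {L H : TopGroupoid} (F : ContFunctor L H) : Prop :=
  IsHomeomorph (fibMap F)

/-- The arrow set of the fibre of `F`: arrows `g` of `L` with `F¹ g = u (F⁰ (s g))`. -/
def fibreArr {L H : TopGroupoid} (F : ContFunctor L H) : Set L.Arr :=
  {g | F.arr g = H.u (F.obj (L.s g))}

/-- A space is locally Hausdorff if every point has an open neighbourhood that is
Hausdorff in the subspace topology. -/
def LocHausdorff (X : Type) [TopologicalSpace X] : Prop :=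
  ∀ x : X, ∃ U : Set X, x ∈ U ∧ IsOpen U ∧ T2Space U

/-- A space is locally Hausdorff and locally compact if it is locally Hausdorff and
every point has a compact Hausdorff neighbourhood. -/
def LocHausdorffLocCompact (X : Type) [TopologicalSpace X] : Prop :=
  LocHausdorff X ∧ ∀ x : X, ∃ K : Set X, K ∈ nhds x ∧ IsCompact K ∧ T2Space K

open Filter Set Topology

section Helpers
variable {X : Type} [TopologicalSpace X]

/-- Relative separation property of a subset. -/
def RelSep (S : Set X) : Prop :=
  ∀ p ∈ S, ∀ q ∈ S, p ≠ q → ∃ A B : Set X,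
    IsOpen A ∧ IsOpen B ∧ p ∈ A ∧ q ∈ B ∧ A ∩ B ∩ S = ∅

theorem t2sub {S : Set X} (h : T2Space S) : RelSep S := by
  intro p hp q hq hne
  haveI := h
  obtain ⟨u, v, hu, hv, hpu, hqv, huv⟩ :=
    t2_separation (x := (⟨p, hp⟩ : S)) (y := ⟨q, hq⟩) (fun he => hne (congrArg Subtype.val he))
  obtain ⟨A, hA, hAu⟩ := isOpen_induced_iff.mp hu
  obtain ⟨B, hB, hBv⟩ := isOpen_induced_iff.mp hv
  refine ⟨A, B, hA, hB, ?_, ?_, ?_⟩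
  · have : (⟨p, hp⟩ : S) ∈ Subtype.val ⁻¹' A := hAu ▸ hpu
    exact this
  · have : (⟨q, hq⟩ : S) ∈ Subtype.val ⁻¹' B := hBv ▸ hqv
    exact this
  · apply Set.eq_empty_iff_forall_notMem.mpr
    rintro c ⟨⟨hcA, hcB⟩, hcS⟩
    have h1 : (⟨c, hcS⟩ : S) ∈ u := by rw [← hAu]; exact hcA
    have h2 : (⟨c, hcS⟩ : S) ∈ v := by rw [← hBv]; exact hcB
    exact (Set.disjoint_left.mp huv h1) h2

theorem relSep_univ [T2Space X] : RelSep (Set.univ : Set X) :=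
  t2sub inferInstance

theorem sep_to_t2 {U : Set X}
    (h : ∀ a ∈ U, ∀ b ∈ U, a ≠ b → ∃ S T : Set X,
      IsOpen S ∧ IsOpen T ∧ a ∈ S ∧ b ∈ T ∧ S ∩ T ∩ U = ∅) : T2Space U := by
  refine ⟨fun p q hne => ?_⟩
  obtain ⟨S, T, hS, hT, hpS, hqT, hem⟩ :=
    h p.1 p.2 q.1 q.2 (fun he => hne (Subtype.ext he))
  refine ⟨Subtype.val ⁻¹' S, Subtype.val ⁻¹' T, hS.preimage continuous_subtype_val,
    hT.preimage continuous_subtype_val, hpS, hqT, ?_⟩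
  rw [Set.disjoint_left]
  intro z hzS hzT
  exact Set.eq_empty_iff_forall_notMem.mp hem z.1 ⟨⟨hzS, hzT⟩, z.2⟩

theorem t2_image_val {S : Set X} {K : Set S} (h : T2Space K) :
    T2Space ↥(Subtype.val '' K : Set X) := by
  refine ⟨fun p q hne => ?_⟩
  obtain ⟨kp, hkp, hkpe⟩ := p.2
  obtain ⟨kq, hkq, hkqe⟩ := q.2
  have hne' : kp ≠ kq := by
    intro he
    exact hne (Subtype.ext (by rw [← hkpe, ← hkqe, he]))
  obtain ⟨A, B, hA, hB, hpA, hqB, hem⟩ := t2sub h kp hkp kq hkq hne'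
  obtain ⟨A', hA', hA'e⟩ := isOpen_induced_iff.mp hA
  obtain ⟨B', hB', hB'e⟩ := isOpen_induced_iff.mp hB
  refine ⟨Subtype.val ⁻¹' A', Subtype.val ⁻¹' B', hA'.preimage continuous_subtype_val,
    hB'.preimage continuous_subtype_val, ?_, ?_, ?_⟩
  · show p.1 ∈ A'
    rw [← hkpe]
    have : kp ∈ Subtype.val ⁻¹' A' := hA'e ▸ hpA
    exact this
  · show q.1 ∈ B'
    rw [← hkqe]
    have : kq ∈ Subtype.val ⁻¹' B' := hB'e ▸ hqB
    exact this
  · rw [Set.disjoint_left]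
    intro z hzA hzB
    obtain ⟨kz, hkz, hkze⟩ := z.2
    have h1 : kz ∈ A := by rw [← hA'e]; show kz.1 ∈ A'; rw [hkze]; exact hzA
    have h2 : kz ∈ B := by rw [← hB'e]; show kz.1 ∈ B'; rw [hkze]; exact hzB
    exact Set.eq_empty_iff_forall_notMem.mp hem kz ⟨⟨h1, h2⟩, hkz⟩

/-- Uniqueness of limits inside a Hausdorff piece. -/
theorem lim_unique0 {S : Set X} (hT2 : T2Space S) {G : Filter X} [G.NeBot]
    (hS : S ∈ G) {x y : X} (hx : x ∈ S) (hy : y ∈ S)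
    (h1 : G ≤ nhds x) (h2 : G ≤ nhds y) : x = y := by
  by_contra hxy
  haveI := hT2
  obtain ⟨u, v, hu, hv, hxu, hyv, huv⟩ :=
    t2_separation (x := (⟨x, hx⟩ : S)) (y := ⟨y, hy⟩) (fun he => hxy (congrArg Subtype.val he))
  have hGx : comap (Subtype.val : S → X) G ≤ nhds (⟨x, hx⟩ : S) := by
    rw [nhds_induced]; exact comap_mono h1
  have hGy : comap (Subtype.val : S → X) G ≤ nhds (⟨y, hy⟩ : S) := by
    rw [nhds_induced]; exact comap_mono h2
  haveI : (comap (Subtype.val : S → X) G).NeBot := by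
    rw [comap_neBot_iff]
    intro t ht
    obtain ⟨z, hz⟩ := Filter.nonempty_of_mem (Filter.inter_mem ht hS)
    exact ⟨⟨z, hz.2⟩, hz.1⟩
  have hmem : u ∩ v ∈ comap (Subtype.val : S → X) G :=
    Filter.inter_mem (hGx (hu.mem_nhds hxu)) (hGy (hv.mem_nhds hyv))
  obtain ⟨z, hz⟩ := Filter.nonempty_of_mem hmem
  exact (Set.disjoint_left.mp huv hz.1) hz.2

theorem lim_unique {α : Type} {S : Set X} (hT2 : T2Space S) {f : α → X} {l : Filter α}
    [l.NeBot] (hS : f ⁻¹' S ∈ l) {x y : X} (hx : x ∈ S) (hy : y ∈ S)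
    (h1 : Filter.Tendsto f l (nhds x)) (h2 : Filter.Tendsto f l (nhds y)) : x = y := by
  haveI : (Filter.map f l).NeBot := Filter.NeBot.map inferInstance _
  exact lim_unique0 hT2 (Filter.mem_map.mpr hS) hx hy h1 h2

theorem shrink_compact {K : Set X} (hK : IsCompact K) (hT2 : T2Space K) {x : X}
    (hxK : K ∈ nhds x) {O : Set X} (hO : IsOpen O) (hxO : x ∈ O) :
    ∃ C : Set X, IsCompact C ∧ T2Space ↥C ∧ C ∈ nhds x ∧ C ⊆ O ∩ K := by
  haveI := hT2
  haveI : CompactSpace ↥K := isCompact_iff_compactSpace.mp hK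
  set xh : K := ⟨x, mem_of_mem_nhds hxK⟩
  have hO' : IsOpen (Subtype.val ⁻¹' O : Set K) := hO.preimage continuous_subtype_val
  have hmem : (Subtype.val ⁻¹' O : Set K) ∈ nhds xh := hO'.mem_nhds hxO
  obtain ⟨C', hC'n, hC'c, hC'sub⟩ := exists_mem_nhds_isClosed_subset hmem
  refine ⟨Subtype.val '' C', hC'c.isCompact.image continuous_subtype_val,
    t2_image_val inferInstance, ?_, ?_⟩
  · rw [nhds_induced (Subtype.val : K → X) xh] at hC'n
    obtain ⟨t, ht, htsub⟩ := Filter.mem_comap.mp hC'n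
    apply Filter.mem_of_superset (Filter.inter_mem ht hxK)
    rintro z ⟨hzt, hzK⟩
    exact ⟨⟨z, hzK⟩, htsub hzt, rfl⟩
  · rintro c ⟨ch, hch, hche⟩
    exact ⟨hche ▸ hC'sub hch, hche ▸ ch.2⟩

end Helpers

open Filter Set Topology

namespace TGproof
variable {L H : TopGroupoid} (F : ContFunctor L H)

/-- Pairs of arrows with the same image under `(F¹,s)`. -/
def Wset : Set (L.Arr × L.Arr) := {w | F.arr w.1 = F.arr w.2 ∧ L.s w.1 = L.s w.2}

/-- Composable pairs. -/
def Zset (L : TopGroupoid) : Set (L.Arr × L.Arr) := {w | L.s w.1 = L.r w.2}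

/-- Division map. -/
def dd (L : TopGroupoid) : L.Arr × L.Arr → L.Arr := fun w => L.m w.1 (L.i w.2)

def mm (L : TopGroupoid) : L.Arr × L.Arr → L.Arr := fun w => L.m w.1 w.2

variable {F}

theorem cont_mm : ContinuousOn (mm L) (Zset L) :=
  continuousOn_iff_continuous_restrict.mpr L.cont_m

theorem comp_i {a b : L.Arr} (hs : L.s a = L.s b) : L.s a = L.r (L.i b) := by
  rw [L.r_i]; exact hs

theorem cont_dd : ContinuousOn (dd L) (Wset F) := by
  have h1 : Continuous (fun w : L.Arr × L.Arr => (w.1, L.i w.2)) :=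
    continuous_fst.prodMk (L.cont_i.comp continuous_snd)
  exact ContinuousOn.comp (t := Zset L) cont_mm h1.continuousOn
    (fun w hw => comp_i hw.2)

theorem s_dd {a b : L.Arr} (hs : L.s a = L.s b) : L.s (dd L (a, b)) = L.r b := by
  show L.s (L.m a (L.i b)) = L.r b
  rw [L.s_m _ _ (comp_i hs), L.s_i]

theorem r_dd {a b : L.Arr} (hs : L.s a = L.s b) : L.r (dd L (a, b)) = L.r a :=
  L.r_m _ _ (comp_i hs)

theorem recomp {a b : L.Arr} (hs : L.s a = L.s b) : L.m (dd L (a, b)) b = a := by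
  show L.m (L.m a (L.i b)) b = a
  rw [L.m_assoc a (L.i b) b (comp_i hs) (by rw [L.s_i]), L.i_m, ← hs, L.m_u]

theorem dd_self (a : L.Arr) : dd L (a, a) = L.u (L.r a) := L.m_i a

theorem dd_mem_G {a b : L.Arr} (hf : F.arr a = F.arr b) (hs : L.s a = L.s b) :
    dd L (a, b) ∈ fibreArr F := by
  show F.arr (L.m a (L.i b)) = H.u (F.obj (L.s (L.m a (L.i b))))
  rw [L.s_m _ _ (comp_i hs), L.s_i]
  rw [F.m_arr _ _ (comp_i hs), F.i_arr, hf, H.m_i, F.r_arr]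

theorem unit_mem_G (x : L.Obj) : L.u x ∈ fibreArr F := by
  show F.arr (L.u x) = H.u (F.obj (L.s (L.u x)))
  rw [F.u_arr, L.s_u]

theorem fib_eq_iff {a b : L.Arr} :
    fibMap F a = fibMap F b ↔ (F.arr a = F.arr b ∧ L.s a = L.s b) := by
  constructor
  · intro h
    have := congrArg Subtype.val h
    exact ⟨congrArg Prod.fst this, congrArg Prod.snd this⟩
  · rintro ⟨h1, h2⟩
    apply Subtype.ext
    show (F.arr a, L.s a) = (F.arr b, L.s b)
    rw [h1, h2]

theorem fib_mul {g l : L.Arr} (hg : g ∈ fibreArr F) (hc : L.s g = L.r l) :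
    fibMap F (L.m g l) = fibMap F l := by
  apply fib_eq_iff.mpr
  constructor
  · rw [F.m_arr _ _ hc, hg, hc, ← F.r_arr, H.u_m]
  · exact L.s_m _ _ hc

theorem assoc_dd {g l b : L.Arr} (hc : L.s g = L.r l) (hs : L.s l = L.s b) :
    dd L (L.m g l, b) = L.m g (dd L (l, b)) := by
  show L.m (L.m g l) (L.i b) = L.m g (L.m l (L.i b))
  exact L.m_assoc g l (L.i b) hc (comp_i hs)

theorem cont_fib : Continuous (fibMap F) :=
  Continuous.subtype_mk (F.cont_arr.prodMk L.cont_s) _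

/-- Rectangle extraction from continuity of the division map. -/
theorem rect {w : L.Arr × L.Arr} (hw : w ∈ Wset F) {O : Set L.Arr} (hO : IsOpen O)
    (hdO : dd L w ∈ O) : ∃ S T : Set L.Arr, IsOpen S ∧ IsOpen T ∧ w.1 ∈ S ∧ w.2 ∈ T ∧
      ∀ v ∈ Wset F, v.1 ∈ S → v.2 ∈ T → dd L v ∈ O := by
  have h1 : (dd L) ⁻¹' O ∈ nhdsWithin w (Wset F) :=
    cont_dd w hw (hO.mem_nhds hdO)
  obtain ⟨u, hu, hwu, husub⟩ := mem_nhdsWithin.mp h1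
  obtain ⟨S, T, hS, hT, h1S, h2T, hsub⟩ := isOpen_prod_iff.mp hu w.1 w.2 hwu
  exact ⟨S, T, hS, hT, h1S, h2T, fun v hv hv1 hv2 => husub ⟨hsub ⟨hv1, hv2⟩, hv⟩⟩

theorem rect_m {w : L.Arr × L.Arr} (hw : w ∈ Zset L) {O : Set L.Arr} (hO : IsOpen O)
    (hmO : mm L w ∈ O) : ∃ A₁ A₂ : Set L.Arr, IsOpen A₁ ∧ IsOpen A₂ ∧ w.1 ∈ A₁ ∧ w.2 ∈ A₂ ∧
      ∀ v ∈ Zset L, v.1 ∈ A₁ → v.2 ∈ A₂ → mm L v ∈ O := by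
  have h1 : (mm L) ⁻¹' O ∈ nhdsWithin w (Zset L) :=
    cont_mm w hw (hO.mem_nhds hmO)
  obtain ⟨u, hu, hwu, husub⟩ := mem_nhdsWithin.mp h1
  obtain ⟨S, T, hS, hT, h1S, h2T, hsub⟩ := isOpen_prod_iff.mp hu w.1 w.2 hwu
  exact ⟨S, T, hS, hT, h1S, h2T, fun v hv hv1 hv2 => husub ⟨hsub ⟨hv1, hv2⟩, hv⟩⟩

end TGproof

namespace TGproof
variable {L H : TopGroupoid} {F : ContFunctor L H}

theorem master (hopen : IsOpenMap (fibMap F)) {U Wo : Set L.Arr} (hWo : IsOpen Wo)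
    {V : Set H.Arr} {XW : Set L.Obj} {ZS : Set L.Arr}
    (hV : ∀ a ∈ U, F.arr a ∈ V) (hsepV : RelSep V)
    (hXW : ∀ a ∈ U, L.s a ∈ XW) (hsepX : RelSep XW)
    (hUW : ∀ a ∈ U, ∀ w ∈ Wo, F.arr a = F.arr w → L.s a = L.s w → dd L (a, w) ∈ ZS)
    (hsepZ : RelSep ZS)
    (hwit : ∀ a ∈ U, ∃ w ∈ Wo, F.arr w = F.arr a ∧ L.s w = L.s a) :
    ∀ a ∈ U, ∀ b ∈ U, a ≠ b → ∃ S T : Set L.Arr,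
      IsOpen S ∧ IsOpen T ∧ a ∈ S ∧ b ∈ T ∧ S ∩ T ∩ U = ∅ := by
  intro a ha b hb hne
  by_cases h1 : F.arr a = F.arr b
  · by_cases h2 : L.s a = L.s b
    · -- main case
      obtain ⟨w, hwWo, hwf, hws⟩ := hwit a ha
      have hbwf : F.arr b = F.arr w := (hwf.trans h1).symm
      have hbws : L.s b = L.s w := (hws.trans h2).symm
      have hpaZ : dd L (a, w) ∈ ZS := hUW a ha w hwWo hwf.symm hws.symm
      have hpbZ : dd L (b, w) ∈ ZS := hUW b hb w hwWo hbwf hbws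
      have hne' : dd L (a, w) ≠ dd L (b, w) := by
        intro he
        apply hne
        have ha' := recomp (L := L) hws.symm
        have hb' := recomp (L := L) hbws
        rw [← ha', ← hb', he]
      obtain ⟨A, B, hA, hB, hpaA, hpbB, hemZ⟩ := hsepZ _ hpaZ _ hpbZ hne'
      obtain ⟨S₁, T₁, hS₁, hT₁, haS₁, hwT₁, hr₁⟩ :=
        rect (w := (a, w)) ⟨hwf.symm, hws.symm⟩ hA hpaA
      obtain ⟨S₂, T₂, hS₂, hT₂, hbS₂, hwT₂, hr₂⟩ :=
        rect (w := (b, w)) ⟨hbwf, hbws⟩ hB hpbB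
      set Gset := fibMap F '' (T₁ ∩ T₂ ∩ Wo) with hGdef
      have hGopen : IsOpen Gset := hopen _ ((hT₁.inter hT₂).inter hWo)
      have hfw : fibMap F w = fibMap F a := fib_eq_iff.mpr ⟨hwf, hws⟩
      refine ⟨S₁ ∩ fibMap F ⁻¹' Gset, S₂ ∩ fibMap F ⁻¹' Gset,
        hS₁.inter (hGopen.preimage cont_fib), hS₂.inter (hGopen.preimage cont_fib),
        ⟨haS₁, ⟨w, ⟨⟨hwT₁, hwT₂⟩, hwWo⟩, hfw⟩⟩,
        ⟨hbS₂, ⟨w, ⟨⟨hwT₁, hwT₂⟩, hwWo⟩, hfw.trans (fib_eq_iff.mpr ⟨h1, h2⟩)⟩⟩, ?_⟩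
      apply Set.eq_empty_iff_forall_notMem.mpr
      rintro c ⟨⟨⟨hcS₁, hcG⟩, hcS₂, -⟩, hcU⟩
      obtain ⟨w'', ⟨⟨hw''T₁, hw''T₂⟩, hw''Wo⟩, hw''e⟩ := hcG
      obtain ⟨hcf, hcs⟩ := fib_eq_iff.mp hw''e.symm
      have hdA : dd L (c, w'') ∈ A := hr₁ (c, w'') ⟨hcf, hcs⟩ hcS₁ hw''T₁
      have hdB : dd L (c, w'') ∈ B := hr₂ (c, w'') ⟨hcf, hcs⟩ hcS₂ hw''T₂
      have hdZ : dd L (c, w'') ∈ ZS := hUW c hcU w'' hw''Wo hcf hcs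
      exact Set.eq_empty_iff_forall_notMem.mp hemZ _ ⟨⟨hdA, hdB⟩, hdZ⟩
    · obtain ⟨A, B, hA, hB, hpA, hqB, hem⟩ :=
        hsepX _ (hXW a ha) _ (hXW b hb) h2
      refine ⟨L.s ⁻¹' A, L.s ⁻¹' B, hA.preimage L.cont_s, hB.preimage L.cont_s,
        hpA, hqB, ?_⟩
      apply Set.eq_empty_iff_forall_notMem.mpr
      rintro c ⟨⟨hcA, hcB⟩, hcU⟩
      exact Set.eq_empty_iff_forall_notMem.mp hem (L.s c) ⟨⟨hcA, hcB⟩, hXW c hcU⟩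
  · obtain ⟨A, B, hA, hB, hpA, hqB, hem⟩ :=
      hsepV _ (hV a ha) _ (hV b hb) h1
    refine ⟨F.arr ⁻¹' A, F.arr ⁻¹' B, hA.preimage F.cont_arr, hB.preimage F.cont_arr,
      hpA, hqB, ?_⟩
    apply Set.eq_empty_iff_forall_notMem.mpr
    rintro c ⟨⟨hcA, hcB⟩, hcU⟩
    exact Set.eq_empty_iff_forall_notMem.mp hem (F.arr c) ⟨⟨hcA, hcB⟩, hV c hcU⟩

theorem lift (hopen : IsOpenMap (fibMap F)) {ℱ : Ultrafilter L.Arr} {q : FibTarget F}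
    (hq : Tendsto (fibMap F) (ℱ : Filter L.Arr) (nhds q)) {b : L.Arr}
    (hb : fibMap F b = q) :
    ∃ ℋ : Ultrafilter (L.Arr × L.Arr), (ℋ : Filter (L.Arr × L.Arr)) ≤ 𝓟 (Wset F) ∧
      ℋ.map Prod.fst = ℱ ∧ Tendsto Prod.snd (ℋ : Filter (L.Arr × L.Arr)) (nhds b) := by
  have hne : (((ℱ : Filter L.Arr) ×ˢ nhds b) ⊓ 𝓟 (Wset F)).NeBot := by
    rw [inf_principal_neBot_iff]
    intro s hs
    obtain ⟨A, hA, B, hB, hABs⟩ := Filter.mem_prod_iff.mp hs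
    obtain ⟨B', hB'sub, hB'o, hbB'⟩ := mem_nhds_iff.mp hB
    have himg : fibMap F '' B' ∈ nhds q := (hopen B' hB'o).mem_nhds ⟨b, hbB', hb⟩
    have hpre : fibMap F ⁻¹' (fibMap F '' B') ∈ (ℱ : Filter L.Arr) := hq himg
    obtain ⟨a, haA, b'', hb''B', hb''e⟩ :=
      Filter.nonempty_of_mem (Filter.inter_mem hA hpre)
    exact ⟨(a, b''), hABs ⟨haA, hB'sub hb''B'⟩, fib_eq_iff.mp hb''e.symm⟩
  haveI := hne
  have hofle := Ultrafilter.of_le ((((ℱ : Filter L.Arr) ×ˢ nhds b) ⊓ 𝓟 (Wset F)))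
  refine ⟨Ultrafilter.of ((((ℱ : Filter L.Arr) ×ˢ nhds b) ⊓ 𝓟 (Wset F))), ?_, ?_, ?_⟩
  · exact hofle.trans inf_le_right
  · apply Ultrafilter.coe_le_coe.mp
    rw [Ultrafilter.coe_map]
    refine le_trans (Filter.map_mono (hofle.trans inf_le_left)) ?_
    exact tendsto_fst
  · exact tendsto_snd.mono_left (hofle.trans inf_le_left)

end TGproof

namespace TGproof
variable {L H : TopGroupoid} {F : ContFunctor L H}

theorem partA (hF : IsFibration F) (h1 : T2Space L.Obj) (h2 : T2Space (fibreArr F))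
    (h3 : T2Space H.Obj) (h4 : T2Space H.Arr) : T2Space L.Arr := by
  haveI := h1; haveI := h4
  have hsep := master (F := F) hF.2 (U := Set.univ) (Wo := Set.univ) isOpen_univ
    (V := Set.univ) (XW := Set.univ) (ZS := fibreArr F)
    (fun a _ => Set.mem_univ _) relSep_univ (fun a _ => Set.mem_univ _) relSep_univ
    (fun a _ w _ hf hs => dd_mem_G hf hs) (t2sub h2)
    (fun a _ => ⟨a, Set.mem_univ _, rfl, rfl⟩)
  refine ⟨fun a b hne => ?_⟩
  obtain ⟨S, T, hS, hT, haS, hbT, hem⟩ := hsep a (Set.mem_univ _) b (Set.mem_univ _) hne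
  refine ⟨S, T, hS, hT, haS, hbT, Set.disjoint_iff_inter_eq_empty.mpr ?_⟩
  rw [← Set.inter_univ (S ∩ T)]
  exact hem

theorem partB (hF : IsFibration F) (h1 : LocHausdorff L.Obj)
    (h2 : LocHausdorff (fibreArr F)) (h4 : LocHausdorff H.Arr) :
    LocHausdorff L.Arr := by
  intro l₀
  obtain ⟨V, hVmem, hVopen, hVt2⟩ := h4 (F.arr l₀)
  obtain ⟨XW, hXmem, hXopen, hXt2⟩ := h1 (L.s l₀)
  have he₀ : L.u (L.r l₀) ∈ fibreArr F := unit_mem_G _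
  obtain ⟨Osub, hOmem, hOopen, hOt2⟩ := h2 ⟨L.u (L.r l₀), he₀⟩
  obtain ⟨OG, hOGopen, hOGpre⟩ := isOpen_induced_iff.mp hOopen
  have hZT2 : T2Space ↥(OG ∩ fibreArr F) := by
    have := t2_image_val (K := Osub) hOt2
    rw [← hOGpre, Subtype.image_preimage_coe] at this
    rwa [Set.inter_comm] at this
  have he₀OG : L.u (L.r l₀) ∈ OG := by
    have : (⟨L.u (L.r l₀), he₀⟩ : fibreArr F) ∈ Subtype.val ⁻¹' OG := hOGpre ▸ hOmem
    exact this
  have hw₀ : ((l₀, l₀) : L.Arr × L.Arr) ∈ Wset F := ⟨rfl, rfl⟩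
  have hd₀ : dd L (l₀, l₀) ∈ OG := by rw [dd_self]; exact he₀OG
  obtain ⟨S₀, T₀, hS₀, hT₀, hlS₀, hlT₀, hr₀⟩ := rect hw₀ hOGopen hd₀
  set U := F.arr ⁻¹' V ∩ L.s ⁻¹' XW ∩ (S₀ ∩ T₀) with hUdef
  have hUopen : IsOpen U :=
    ((hVopen.preimage F.cont_arr).inter (hXopen.preimage L.cont_s)).inter (hS₀.inter hT₀)
  have hl₀U : l₀ ∈ U := ⟨⟨hVmem, hXmem⟩, hlS₀, hlT₀⟩
  have hsep := master hF.2 (Wo := U) hUopen (V := V) (XW := XW) (ZS := OG ∩ fibreArr F)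
    (fun a haU => haU.1.1) (t2sub hVt2) (fun a haU => haU.1.2) (t2sub hXt2)
    (fun a haU w hwU hf hs => ⟨hr₀ (a, w) ⟨hf, hs⟩ haU.2.1 hwU.2.2, dd_mem_G hf hs⟩)
    (t2sub hZT2) (fun a haU => ⟨a, haU, rfl, rfl⟩)
  exact ⟨U, hl₀U, hUopen, sep_to_t2 hsep⟩

end TGproof

namespace TGproof
variable {L H : TopGroupoid} {F : ContFunctor L H}

theorem partC_arr (hF : IsFibration F) (hLobj : LocHausdorffLocCompact L.Obj)
    (hG : LocHausdorffLocCompact (fibreArr F)) (hHobj : LocHausdorffLocCompact H.Obj)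
    (hHarr : LocHausdorffLocCompact H.Arr) (l₀ : L.Arr) :
    ∃ K : Set L.Arr, K ∈ nhds l₀ ∧ IsCompact K ∧ T2Space K := by
  set e₀ := L.u (L.r l₀) with he₀def
  have he₀ : e₀ ∈ fibreArr F := unit_mem_G _
  obtain ⟨X₀, hX₀mem, hX₀open, hX₀t2⟩ := hLobj.1 (L.r l₀)
  obtain ⟨Osub, hOmem, hOopen, hOt2⟩ := hG.1 ⟨e₀, he₀⟩
  obtain ⟨OG, hOGopen, hOGpre⟩ := isOpen_induced_iff.mp hOopen
  have hZT2 : T2Space ↥(fibreArr F ∩ OG) := by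
    have := t2_image_val (K := Osub) hOt2
    rwa [← hOGpre, Subtype.image_preimage_coe] at this
  have he₀OG : e₀ ∈ OG := by
    have : (⟨e₀, he₀⟩ : fibreArr F) ∈ Subtype.val ⁻¹' OG := hOGpre ▸ hOmem
    exact this
  -- multiplication continuity at (e₀, e₀)
  have he₀Z : ((e₀, e₀) : L.Arr × L.Arr) ∈ Zset L := by
    show L.s e₀ = L.r e₀
    rw [he₀def, L.s_u, L.r_u]
  have hmee : mm L (e₀, e₀) ∈ OG := by
    have h := L.u_m e₀
    have h2 : L.r e₀ = L.r l₀ := by rw [he₀def, L.r_u]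
    show L.m e₀ e₀ ∈ OG
    rw [he₀def] at h2 ⊢
    rw [show L.m (L.u (L.r l₀)) (L.u (L.r l₀)) = L.u (L.r l₀) by
      have h3 := L.u_m (L.u (L.r l₀)); rwa [L.r_u] at h3]
    exact he₀OG
  obtain ⟨A₁, A₂, hA₁, hA₂, heA₁, heA₂, hrm⟩ := rect_m he₀Z hOGopen hmee
  -- compact Hausdorff piece C in the fibre around e₀
  obtain ⟨Ksub, hKsmem, hKscomp, hKst2⟩ := hG.2 ⟨e₀, he₀⟩
  set Oall := OG ∩ (A₁ ∩ (A₂ ∩ L.s ⁻¹' X₀)) with hOalldef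
  have hOallopen : IsOpen Oall := hOGopen.inter (hA₁.inter (hA₂.inter (hX₀open.preimage L.cont_s)))
  have hse₀ : L.s e₀ ∈ X₀ := by rw [he₀def, L.s_u]; exact hX₀mem
  have he₀all : e₀ ∈ Oall := ⟨he₀OG, heA₁, heA₂, hse₀⟩
  obtain ⟨Csub, hCcomp', hCt2', hCmem', hCsub'⟩ :=
    shrink_compact hKscomp hKst2 hKsmem
      (O := Subtype.val ⁻¹' Oall) (hOallopen.preimage continuous_subtype_val) he₀all
  set C := (Subtype.val '' Csub : Set L.Arr) with hCdef
  have hCcomp : IsCompact C := hCcomp'.image continuous_subtype_val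
  have hCt2 : T2Space ↥C := t2_image_val hCt2'
  have hCsubG : C ⊆ fibreArr F := by
    rintro c ⟨ch, hch, rfl⟩
    exact ch.2
  have hCsubOall : C ⊆ Oall := by
    rintro c ⟨ch, hch, rfl⟩
    exact (hCsub' hch).1
  -- open O_C with e₀ ∈ O_C and O_C ∩ fibreArr F ⊆ C
  rw [nhds_induced (Subtype.val : (fibreArr F) → L.Arr)] at hCmem'
  obtain ⟨t, ht, htsub⟩ := Filter.mem_comap.mp hCmem'
  have hOC : ∀ z, z ∈ interior t → z ∈ fibreArr F → z ∈ C :=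
    fun z hz hzG => by
      have hzt : z ∈ t := interior_subset hz
      exact ⟨⟨z, hzG⟩, htsub hzt, rfl⟩
  have he₀t : e₀ ∈ interior t := mem_interior_iff_mem_nhds.mpr ht
  -- rectangle for dd at (l₀, l₀) into interior t
  have hd₀ : dd L (l₀, l₀) ∈ interior t := by rw [dd_self]; exact he₀t
  obtain ⟨S₀, T₀, hS₀, hT₀, hlS₀, hlT₀, hr₀⟩ :=
    rect (w := (l₀, l₀)) ⟨rfl, rfl⟩ isOpen_interior hd₀
  set U := (S₀ ∩ T₀) ∩ L.r ⁻¹' X₀ with hUdef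
  have hUopen : IsOpen U := (hS₀.inter hT₀).inter (hX₀open.preimage L.cont_r)
  have hl₀U : l₀ ∈ U := ⟨⟨hlS₀, hlT₀⟩, hX₀mem⟩
  have hUdd : ∀ a b, a ∈ U → b ∈ U → F.arr a = F.arr b → L.s a = L.s b →
      dd L (a, b) ∈ C :=
    fun a b ha hb hf hs => hOC _ (hr₀ (a, b) ⟨hf, hs⟩ ha.1.1 hb.1.2) (dd_mem_G hf hs)
  -- compact Hausdorff piece Q₀ in FibTarget
  obtain ⟨Y₀, hY₀mem, hY₀open, hY₀t2⟩ := hHobj.1 (H.s (F.arr l₀))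
  obtain ⟨KH0, hKH0mem, hKH0comp, hKH0t2⟩ := hHarr.2 (F.arr l₀)
  obtain ⟨KH, hKHcomp, hKHt2, hKHmem, hKHsub⟩ :=
    shrink_compact hKH0comp hKH0t2 hKH0mem (hY₀open.preimage H.cont_s) hY₀mem
  obtain ⟨KO0, hKO0mem, hKO0comp, hKO0t2⟩ := hLobj.2 (L.s l₀)
  have hsl₀Y : F.obj (L.s l₀) ∈ Y₀ := by rw [← F.s_arr]; exact hY₀mem
  obtain ⟨KO, hKOcomp, hKOt2, hKOmem, hKOsub⟩ :=
    shrink_compact hKO0comp hKO0t2 hKO0mem (hY₀open.preimage F.cont_obj) hsl₀Y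
  set Q₀ : Set (FibTarget F) := {p | p.1.1 ∈ KH ∧ p.1.2 ∈ KO} with hQ₀def
  have hQ₀comp : IsCompact Q₀ := by
    rw [isCompact_iff_ultrafilter_le_nhds]
    intro 𝒬 h𝒬
    have hQmem : Q₀ ∈ (𝒬 : Filter (FibTarget F)) := le_principal_iff.mp h𝒬
    have h1le : (𝒬.map (fun p : FibTarget F => p.1.1) : Filter H.Arr) ≤ Filter.principal KH := by
      rw [Ultrafilter.coe_map, le_principal_iff, mem_map]
      exact mem_of_superset hQmem (fun p hp => hp.1)
    obtain ⟨hs, hhsKH, hhslim⟩ := hKHcomp.ultrafilter_le_nhds _ h1le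
    have hhslim' : Tendsto (fun p : FibTarget F => p.1.1) (𝒬 : Filter _) (nhds hs) := by
      rwa [Ultrafilter.coe_map] at hhslim
    have h2le : (𝒬.map (fun p : FibTarget F => p.1.2) : Filter L.Obj) ≤ Filter.principal KO := by
      rw [Ultrafilter.coe_map, le_principal_iff, mem_map]
      exact mem_of_superset hQmem (fun p hp => hp.2)
    obtain ⟨xs, hxsKO, hxslim⟩ := hKOcomp.ultrafilter_le_nhds _ h2le
    have hxslim' : Tendsto (fun p : FibTarget F => p.1.2) (𝒬 : Filter _) (nhds xs) := by
      rwa [Ultrafilter.coe_map] at hxslim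
    haveI hQne : NeBot (𝒬 : Filter (FibTarget F)) := 𝒬.neBot
    haveI : NeBot (Filter.map (fun p : FibTarget F => H.s p.1.1) (𝒬 : Filter _)) :=
      hQne.map _
    have hmap1 : Tendsto (fun p : FibTarget F => H.s p.1.1) (𝒬 : Filter _) (nhds (H.s hs)) :=
      (H.cont_s.tendsto hs).comp hhslim'
    have hmap2 : Tendsto (fun p : FibTarget F => H.s p.1.1) (𝒬 : Filter _) (nhds (F.obj xs)) := by
      have h2 : Tendsto (fun p : FibTarget F => F.obj p.1.2) (𝒬 : Filter _) (nhds (F.obj xs)) :=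
        (F.cont_obj.tendsto xs).comp hxslim'
      apply Tendsto.congr' ?_ h2
      filter_upwards with p
      exact p.2.symm
    have heq : H.s hs = F.obj xs :=
      lim_unique hY₀t2 (f := fun p : FibTarget F => H.s p.1.1) (l := (𝒬 : Filter _))
        (mem_of_superset hQmem (fun p hp => (hKHsub hp.1).1))
        (hKHsub hhsKH).1 (hKOsub hxsKO).1 hmap1 hmap2
    refine ⟨⟨(hs, xs), heq⟩, ⟨hhsKH, hxsKO⟩, ?_⟩
    have hv := hhslim'.prodMk_nhds hxslim'
    rw [nhds_induced (Subtype.val : FibTarget F → H.Arr × L.Obj)]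
    exact map_le_iff_le_comap.mp hv
  have hQ₀t2 : T2Space ↥Q₀ := by
    refine ⟨fun p q hne => ?_⟩
    by_cases hc : (p.1).1.1 = (q.1).1.1
    · have hc2 : (p.1).1.2 ≠ (q.1).1.2 := by
        intro h
        exact hne (Subtype.ext (Subtype.ext (Prod.ext hc h)))
      obtain ⟨A, B, hA, hB, hpA, hqB, hem⟩ := t2sub hKOt2 _ p.2.2 _ q.2.2 hc2
      refine ⟨(fun z : Q₀ => (z.1).1.2) ⁻¹' A, (fun z : Q₀ => (z.1).1.2) ⁻¹' B,
        hA.preimage ((continuous_snd.comp continuous_subtype_val).comp continuous_subtype_val),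
        hB.preimage ((continuous_snd.comp continuous_subtype_val).comp continuous_subtype_val),
        hpA, hqB, ?_⟩
      rw [Set.disjoint_left]
      intro z hzA hzB
      exact Set.eq_empty_iff_forall_notMem.mp hem _ ⟨⟨hzA, hzB⟩, z.2.2⟩
    · obtain ⟨A, B, hA, hB, hpA, hqB, hem⟩ := t2sub hKHt2 _ p.2.1 _ q.2.1 hc
      refine ⟨(fun z : Q₀ => (z.1).1.1) ⁻¹' A, (fun z : Q₀ => (z.1).1.1) ⁻¹' B,
        hA.preimage ((continuous_fst.comp continuous_subtype_val).comp continuous_subtype_val),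
        hB.preimage ((continuous_fst.comp continuous_subtype_val).comp continuous_subtype_val),
        hpA, hqB, ?_⟩
      rw [Set.disjoint_left]
      intro z hzA hzB
      exact Set.eq_empty_iff_forall_notMem.mp hem _ ⟨⟨hzA, hzB⟩, z.2.1⟩
  have hQ₀mem : Q₀ ∈ nhds (fibMap F l₀) := by
    have hprod : KH ×ˢ KO ∈ nhds ((F.arr l₀, L.s l₀) : H.Arr × L.Obj) := by
      rw [nhds_prod_eq]
      exact Filter.prod_mem_prod hKHmem hKOmem
    rw [nhds_induced (Subtype.val : FibTarget F → H.Arr × L.Obj)]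
    exact Filter.mem_of_superset (Filter.preimage_mem_comap hprod) (fun p hp => ⟨hp.1, hp.2⟩)
  have hfUopen : IsOpen (fibMap F '' U) := hF.2 _ hUopen
  have hfl₀U : fibMap F l₀ ∈ fibMap F '' U := ⟨l₀, hl₀U, rfl⟩
  obtain ⟨Q, hQcomp, hQt2, hQmem, hQsub⟩ :=
    shrink_compact hQ₀comp hQ₀t2 hQ₀mem hfUopen hfl₀U
  set K : Set L.Arr :=
    {l | fibMap F l ∈ Q ∧ ∀ b ∈ U, fibMap F b = fibMap F l → dd L (l, b) ∈ C} with hKdef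
  have hKnhds : K ∈ nhds l₀ := by
    have h1 : U ∩ fibMap F ⁻¹' (interior Q) ∈ nhds l₀ :=
      (hUopen.inter (isOpen_interior.preimage cont_fib)).mem_nhds
        ⟨hl₀U, mem_interior_iff_mem_nhds.mpr hQmem⟩
    apply Filter.mem_of_superset h1
    rintro l ⟨hlU, hlQ⟩
    refine ⟨interior_subset hlQ, fun b hbU hfb => ?_⟩
    exact hUdd l b hlU hbU (fib_eq_iff.mp hfb.symm).1 (fib_eq_iff.mp hfb.symm).2
  have hKcomp : IsCompact K := by
    rw [isCompact_iff_ultrafilter_le_nhds]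
    intro ℱ hℱ
    have hKmemF : K ∈ (ℱ : Filter L.Arr) := le_principal_iff.mp hℱ
    have hfibQ : (ℱ.map (fibMap F) : Filter (FibTarget F)) ≤ Filter.principal Q := by
      rw [Ultrafilter.coe_map, le_principal_iff, mem_map]
      exact Filter.mem_of_superset hKmemF (fun l hl => hl.1)
    obtain ⟨q, hqQ, hqlim⟩ := hQcomp.ultrafilter_le_nhds _ hfibQ
    have hqlim' : Tendsto (fibMap F) (ℱ : Filter _) (nhds q) := by
      rwa [Ultrafilter.coe_map] at hqlim
    obtain ⟨l₁, hl₁U, hl₁q⟩ := (hQsub hqQ).1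
    obtain ⟨ℋ, hHW, hHfst, hHsnd⟩ := lift hF.2 hqlim' hl₁q
    haveI hHne : NeBot (ℋ : Filter (L.Arr × L.Arr)) := ℋ.neBot
    have hWmem : Wset F ∈ (ℋ : Filter _) := le_principal_iff.mp hHW
    have hTmem : (K ×ˢ U) ∩ Wset F ∈ (ℋ : Filter _) := by
      refine Filter.inter_mem ?_ hWmem
      have h1 : (Prod.fst ⁻¹' K : Set (L.Arr × L.Arr)) ∈ (ℋ : Filter _) := by
        have hmm := hKmemF
        rw [← hHfst, Ultrafilter.coe_map, mem_map] at hmm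
        exact hmm
      have h2 : (Prod.snd ⁻¹' U : Set (L.Arr × L.Arr)) ∈ (ℋ : Filter _) :=
        Filter.mem_map.mp (hHsnd (hUopen.mem_nhds hl₁U))
      exact Filter.mem_of_superset (Filter.inter_mem h1 h2) (fun w hw => ⟨hw.1, hw.2⟩)
    have hddC : (ℋ.map (dd L) : Filter L.Arr) ≤ Filter.principal C := by
      rw [Ultrafilter.coe_map, le_principal_iff, mem_map]
      apply Filter.mem_of_superset hTmem
      rintro ⟨a, b⟩ ⟨⟨haK, hbU⟩, hfe, hse⟩
      exact haK.2 b hbU (fib_eq_iff.mpr ⟨hfe.symm, hse.symm⟩)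
    obtain ⟨g, hgC, hglim⟩ := hCcomp.ultrafilter_le_nhds _ hddC
    have hglim' : Tendsto (dd L) (ℋ : Filter _) (nhds g) := by
      rwa [Ultrafilter.coe_map] at hglim
    have hsg : L.s g = L.r l₁ := by
      have t1 : Tendsto (fun w : L.Arr × L.Arr => L.s (dd L w)) (ℋ : Filter _)
          (nhds (L.s g)) := (L.cont_s.tendsto g).comp hglim'
      have t2 : Tendsto (fun w : L.Arr × L.Arr => L.s (dd L w)) (ℋ : Filter _)
          (nhds (L.r l₁)) := by
        apply Tendsto.congr' ?_ ((L.cont_r.tendsto l₁).comp hHsnd)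
        filter_upwards [hWmem] with w hw
        exact (s_dd hw.2).symm
      refine lim_unique hX₀t2
        (f := fun w : L.Arr × L.Arr => L.s (dd L w)) (l := (ℋ : Filter _)) ?_ ?_ ?_ t1 t2
      · apply Filter.mem_of_superset hTmem
        rintro ⟨a, b⟩ ⟨⟨haK, hbU⟩, hfe, hse⟩
        have hdC : dd L (a, b) ∈ C := haK.2 b hbU (fib_eq_iff.mpr ⟨hfe.symm, hse.symm⟩)
        exact (hCsubOall hdC).2.2.2
      · exact (hCsubOall hgC).2.2.2
      · exact hl₁U.2
    have hk : Tendsto Prod.fst (ℋ : Filter (L.Arr × L.Arr)) (nhds (L.m g l₁)) := by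
      have hpair : Tendsto (fun w : L.Arr × L.Arr => (dd L w, w.2)) (ℋ : Filter _)
          (nhdsWithin (g, l₁) (Zset L)) := by
        rw [tendsto_nhdsWithin_iff]
        refine ⟨hglim'.prodMk_nhds hHsnd, ?_⟩
        filter_upwards [hWmem] with w hw
        exact s_dd hw.2
      have hcw : Tendsto (mm L) (nhdsWithin ((g, l₁) : L.Arr × L.Arr) (Zset L))
          (nhds (mm L (g, l₁))) := cont_mm (g, l₁) hsg
      apply Tendsto.congr' ?_ (hcw.comp hpair)
      filter_upwards [hWmem] with w hw
      exact recomp hw.2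
    have hFlim : (ℱ : Filter L.Arr) ≤ nhds (L.m g l₁) := by
      rw [← hHfst, Ultrafilter.coe_map]
      exact hk
    have hkfib : fibMap F (L.m g l₁) = q := (fib_mul (hCsubG hgC) hsg).trans hl₁q
    refine ⟨L.m g l₁, ⟨by rw [hkfib]; exact hqQ, ?_⟩, hFlim⟩
    intro b hbU hfb
    have hfbq : fibMap F b = q := hfb.trans hkfib
    obtain ⟨ℋb, hbWle, hbfst, hbsnd⟩ := lift hF.2 hqlim' hfbq
    haveI hHbne : NeBot (ℋb : Filter (L.Arr × L.Arr)) := ℋb.neBot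
    have hWmemb : Wset F ∈ (ℋb : Filter _) := le_principal_iff.mp hbWle
    have hTmemb : (K ×ˢ U) ∩ Wset F ∈ (ℋb : Filter _) := by
      refine Filter.inter_mem ?_ hWmemb
      have h1 : (Prod.fst ⁻¹' K : Set (L.Arr × L.Arr)) ∈ (ℋb : Filter _) := by
        have hmm := hKmemF
        rw [← hbfst, Ultrafilter.coe_map, mem_map] at hmm
        exact hmm
      have h2 : (Prod.snd ⁻¹' U : Set (L.Arr × L.Arr)) ∈ (ℋb : Filter _) :=
        Filter.mem_map.mp (hbsnd (hUopen.mem_nhds hbU))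
      exact Filter.mem_of_superset (Filter.inter_mem h1 h2) (fun w hw => ⟨hw.1, hw.2⟩)
    have hddCb : (ℋb.map (dd L) : Filter L.Arr) ≤ Filter.principal C := by
      rw [Ultrafilter.coe_map, le_principal_iff, mem_map]
      apply Filter.mem_of_superset hTmemb
      rintro ⟨a, b'⟩ ⟨⟨haK, hb'U⟩, hfe, hse⟩
      exact haK.2 b' hb'U (fib_eq_iff.mpr ⟨hfe.symm, hse.symm⟩)
    obtain ⟨gb, hgbC, hgblim⟩ := hCcomp.ultrafilter_le_nhds _ hddCb
    have hgblim' : Tendsto (dd L) (ℋb : Filter _) (nhds gb) := by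
      rwa [Ultrafilter.coe_map] at hgblim
    have hkb : ((L.m g l₁, b) : L.Arr × L.Arr) ∈ Wset F :=
      fib_eq_iff.mp (hkfib.trans hfbq.symm)
    have hfstb : Tendsto (Prod.fst : L.Arr × L.Arr → L.Arr) (ℋb : Filter _) (nhds (L.m g l₁)) := by
      have hmm := hFlim
      rw [← hbfst, Ultrafilter.coe_map] at hmm
      exact hmm
    have hzlim : Tendsto (dd L) (ℋb : Filter _) (nhds (dd L (L.m g l₁, b))) := by
      have hpairb : Tendsto (fun w : L.Arr × L.Arr => (w.1, w.2)) (ℋb : Filter _)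
          (nhdsWithin (L.m g l₁, b) (Wset F)) := by
        rw [tendsto_nhdsWithin_iff]
        refine ⟨hfstb.prodMk_nhds hbsnd, ?_⟩
        filter_upwards [hWmemb] with w hw
        exact hw
      have hcd : Tendsto (dd L) (nhdsWithin ((L.m g l₁, b) : L.Arr × L.Arr) (Wset F))
          (nhds (dd L (L.m g l₁, b))) := cont_dd (L.m g l₁, b) hkb
      exact hcd.comp hpairb
    have hsl₁b : L.s l₁ = L.s b := (fib_eq_iff.mp (hl₁q.trans hfbq.symm)).2
    have hfl₁b : F.arr l₁ = F.arr b := (fib_eq_iff.mp (hl₁q.trans hfbq.symm)).1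
    have hc' : dd L (l₁, b) ∈ C := hUdd l₁ b hl₁U hbU hfl₁b hsl₁b
    have hzOG : dd L (L.m g l₁, b) ∈ OG := by
      rw [assoc_dd hsg hsl₁b]
      have hcomp2 : L.s g = L.r (dd L (l₁, b)) := by rw [r_dd hsl₁b]; exact hsg
      exact hrm (g, dd L (l₁, b)) hcomp2 (hCsubOall hgC).2.1 (hCsubOall hc').2.2.1
    have hzG : dd L (L.m g l₁, b) ∈ fibreArr F := dd_mem_G hkb.1 hkb.2
    have hfin : dd L (L.m g l₁, b) = gb := by
      refine lim_unique hZT2 (f := dd L) (l := (ℋb : Filter _)) ?_ ⟨hzG, hzOG⟩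
        ⟨hCsubG hgbC, (hCsubOall hgbC).1⟩ hzlim hgblim'
      apply Filter.mem_of_superset hTmemb
      rintro ⟨a, b'⟩ ⟨⟨haK, hb'U⟩, hfe, hse⟩
      have hdC : dd L (a, b') ∈ C := haK.2 b' hb'U (fib_eq_iff.mpr ⟨hfe.symm, hse.symm⟩)
      exact ⟨hCsubG hdC, (hCsubOall hdC).1⟩
    rw [hfin]
    exact hgbC
  have hKt2 : T2Space ↥K := by
    apply sep_to_t2
    apply master hF.2 (Wo := U) hUopen (V := KH) (XW := KO) (ZS := C)
    · intro a haK
      exact ((hQsub haK.1).2).1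
    · exact t2sub hKHt2
    · intro a haK
      exact ((hQsub haK.1).2).2
    · exact t2sub hKOt2
    · intro a haK w hwU hf hs
      exact haK.2 w hwU (fib_eq_iff.mpr ⟨hf.symm, hs.symm⟩)
    · exact t2sub hCt2
    · intro a haK
      obtain ⟨w, hwU, hwe⟩ := (hQsub haK.1).1
      obtain ⟨h1, h2⟩ := fib_eq_iff.mp hwe
      exact ⟨w, hwU, h1, h2⟩
  exact ⟨K, hKnhds, hKcomp, hKt2⟩

end TGproof

/-- a transformation groupoid `L` of a fibration inherits
(local) Hausdorffness and local compactness from the fibre `G` and the base `H`.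
Here `G⁰ = L⁰` and `G¹ = fibreArr F`. -/
theorem transformation_groupoid_inherits_topological_properties
    (L H : TopGroupoid) (F : ContFunctor L H) (hF : IsFibration F) :
    ((T2Space L.Obj → T2Space (fibreArr F) → T2Space H.Obj → T2Space H.Arr →
        T2Space L.Arr) ∧
     (LocHausdorff L.Obj → LocHausdorff (fibreArr F) → LocHausdorff H.Obj →
        LocHausdorff H.Arr → LocHausdorff L.Arr) ∧
     (LocHausdorffLocCompact L.Obj → LocHausdorffLocCompact (fibreArr F) →
        LocHausdorffLocCompact H.Obj → LocHausdorffLocCompact H.Arr →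
        LocHausdorffLocCompact L.Obj ∧ LocHausdorffLocCompact L.Arr)) := by
  refine ⟨?_, ?_, ?_⟩
  · exact fun h1 h2 h3 h4 => TGproof.partA hF h1 h2 h3 h4
  · exact fun h1 h2 h3 h4 => TGproof.partB hF h1 h2 h4
  · intro h1 h2 h3 h4
    exact ⟨h1, TGproof.partB hF h1.1 h2.1 h4.1,
      fun l₀ => TGproof.partC_arr hF h1 h2 h3 h4 l₀⟩
end

section
/- Let F : L → H be a groupoid fibration with fibre G, and assume the object spaces L⁰ and H⁰ are Hausdorff. If the arrow space H¹ is Hausdorff, then G¹ is closed in L¹. Conversely, if F⁰ : L⁰ → H⁰ is an open surjection and G¹ is closed in L¹, then H¹ is Hausdorff. -/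
section Aux

open Set

/-- In a groupoid, `g · h = g` iff `h` is the unit at `s g`. -/
lemma TopGroupoid.m_eq_left_iff (G : TopGroupoid) (g h : G.Arr) (hc : G.s g = G.r h) :
    G.m g h = g ↔ h = G.u (G.s g) := by
  constructor
  · intro he
    have h1 : G.m (G.m (G.i g) g) h = G.m (G.i g) (G.m g h) :=
      G.m_assoc _ _ _ (G.s_i g) hc
    rw [he, G.i_m] at h1
    have : G.u (G.s g) = G.u (G.r h) := by rw [hc]
    rw [this, G.u_m] at h1
    rw [h1, ← hc]
  · intro he; rw [he]; exact G.m_u g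

/-- If the preimage of a set under an open surjection is closed, the set is closed. -/
lemma closed_of_preimage_closed {A B : Type*} [TopologicalSpace A] [TopologicalSpace B]
    {f : A → B} (hs : Function.Surjective f) (ho : IsOpenMap f) {S : Set B}
    (h : IsClosed (f ⁻¹' S)) : IsClosed S := by
  rw [← isOpen_compl_iff] at h ⊢
  have : Sᶜ = f '' (f ⁻¹' S)ᶜ := by
    rw [← Set.preimage_compl, Set.image_preimage_eq _ hs]
  rw [this]
  exact ho _ h

lemma arr_isOpenMap {L H : TopGroupoid} (F : ContFunctor L H)
    (hopen : IsOpenMap (fibMap F)) (hOopen : IsOpenMap F.obj) :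
    IsOpenMap F.arr := by
  intro U hU
  rw [isOpen_iff_mem_nhds]
  rintro h ⟨l, hlU, rfl⟩
  have him := hopen U hU
  rw [isOpen_induced_iff] at him
  obtain ⟨O, hO, hOeq⟩ := him
  have hmem : ((F.arr l, L.s l) : H.Arr × L.Obj) ∈ O := by
    have : fibMap F l ∈ Subtype.val ⁻¹' O := by
      rw [hOeq]; exact ⟨l, hlU, rfl⟩
    exact this
  obtain ⟨O₁, O₂, hO₁, hl₁, hO₂, hl₂, hsub⟩ :=
    mem_nhds_prod_iff'.mp (hO.mem_nhds hmem)
  refine Filter.mem_of_superset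
    ((hO₁.inter ((hOopen O₂ hO₂).preimage H.cont_s)).mem_nhds
      ⟨hl₁, by show H.s (F.arr l) ∈ F.obj '' O₂; rw [F.s_arr]; exact ⟨L.s l, hl₂, rfl⟩⟩) ?_
  rintro h' ⟨hh₁, x, hxO₂, hsx⟩
  have hfib : H.s h' = F.obj x := hsx.symm
  have : (⟨(h', x), hfib⟩ : FibTarget F) ∈ Subtype.val ⁻¹' O := by
    exact hsub ⟨hh₁, hxO₂⟩
  rw [hOeq] at this
  obtain ⟨l', hl'U, hl'⟩ := this
  exact ⟨l', hl'U, congrArg (fun q => q.1.1) hl'⟩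

/-- The map `(l₁, k) ↦ (F l₁, F k)` on composable pairs. -/
def psiMap {L H : TopGroupoid} (F : ContFunctor L H)
    (p : {p : L.Arr × L.Arr // L.s p.1 = L.r p.2}) :
    {p : H.Arr × H.Arr // H.s p.1 = H.r p.2} :=
  ⟨(F.arr p.1.1, F.arr p.1.2), by rw [F.s_arr, F.r_arr, p.2]⟩

lemma psiMap_isOpenMap {L H : TopGroupoid} (F : ContFunctor L H)
    (hopen : IsOpenMap (fibMap F)) (hOopen : IsOpenMap F.obj) :
    IsOpenMap (psiMap F) := by
  have hFarr := arr_isOpenMap F hopen hOopen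
  intro W hW
  rw [isOpen_iff_mem_nhds]
  rintro q ⟨p, hpW, rfl⟩
  obtain ⟨⟨l₁, k⟩, hcomp⟩ := p
  rw [isOpen_induced_iff] at hW
  obtain ⟨O, hO, hOeq⟩ := hW
  have hmemO : ((l₁, k) : L.Arr × L.Arr) ∈ O := by
    have : (⟨(l₁, k), hcomp⟩ : {p : L.Arr × L.Arr // L.s p.1 = L.r p.2})
        ∈ Subtype.val ⁻¹' O := by rw [hOeq]; exact hpW
    exact this
  obtain ⟨U₁, U₂, hU₁, hlU₁, hU₂, hkU₂, hUsub⟩ :=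
    mem_nhds_prod_iff'.mp (hO.mem_nhds hmemO)
  -- open image of U₁ under fibMap
  have him := hopen U₁ hU₁
  rw [isOpen_induced_iff] at him
  obtain ⟨O', hO', hO'eq⟩ := him
  have hmem' : ((F.arr l₁, L.s l₁) : H.Arr × L.Obj) ∈ O' := by
    have : fibMap F l₁ ∈ Subtype.val ⁻¹' O' := by
      rw [hO'eq]; exact ⟨l₁, hlU₁, rfl⟩
    exact this
  obtain ⟨O₁, O₂, hO₁, hF₁, hO₂, hs₂, hsub'⟩ :=
    mem_nhds_prod_iff'.mp (hO'.mem_nhds hmem')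
  set U₂' := U₂ ∩ L.r ⁻¹' O₂ with hU₂'
  have hU₂'open : IsOpen U₂' := hU₂.inter (hO₂.preimage L.cont_r)
  have hkU₂' : k ∈ U₂' := ⟨hkU₂, by
    show L.r k ∈ O₂
    rw [show L.r k = L.s l₁ from hcomp.symm]; exact hs₂⟩
  -- candidate neighbourhood
  have hTopen : IsOpen (F.arr '' U₂') := hFarr _ hU₂'open
  refine Filter.mem_of_superset
    (((hO₁.prod hTopen).preimage continuous_subtype_val).mem_nhds
      (by exact ⟨hF₁, ⟨k, hkU₂', rfl⟩⟩)) ?_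
  rintro ⟨⟨h₁', h'⟩, hq'⟩ ⟨hh₁', k', hk'U₂', rfl⟩
  have hfib : H.s h₁' = F.obj (L.r k') := by
    rw [hq', F.r_arr]
  have : (⟨(h₁', L.r k'), hfib⟩ : FibTarget F) ∈ Subtype.val ⁻¹' O' :=
    hsub' ⟨hh₁', hk'U₂'.2⟩
  rw [hO'eq] at this
  obtain ⟨l₁', hl₁'U₁, hl₁'⟩ := this
  have hFl₁' : F.arr l₁' = h₁' := congrArg (fun q => q.1.1) hl₁'
  have hsl₁' : L.s l₁' = L.r k' := congrArg (fun q => q.1.2) hl₁'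
  refine ⟨⟨(l₁', k'), hsl₁'⟩, ?_, ?_⟩
  · rw [← hOeq]; exact hUsub ⟨hl₁'U₁, hk'U₂'.1⟩
  · exact Subtype.ext (Prod.ext hFl₁' rfl)

/-- The map `(h₁, h) ↦ (h₁, h₁ · h)` from composable pairs to pairs with equal range. -/
def thetaMap (H : TopGroupoid) (p : {p : H.Arr × H.Arr // H.s p.1 = H.r p.2}) :
    {q : H.Arr × H.Arr // H.r q.1 = H.r q.2} :=
  ⟨(p.1.1, H.m p.1.1 p.1.2), (H.r_m _ _ p.2).symm⟩

def thetaInv (H : TopGroupoid) (q : {q : H.Arr × H.Arr // H.r q.1 = H.r q.2}) :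
    {p : H.Arr × H.Arr // H.s p.1 = H.r p.2} :=
  ⟨(q.1.1, H.m (H.i q.1.1) q.1.2), by
    rw [H.r_m _ _ (by rw [H.s_i]; exact q.2), H.r_i]⟩

lemma thetaInv_continuous (H : TopGroupoid) : Continuous (thetaInv H) := by
  have hinner : Continuous (fun q : {q : H.Arr × H.Arr // H.r q.1 = H.r q.2} =>
      (⟨(H.i q.1.1, q.1.2), by rw [H.s_i]; exact q.2⟩ :
        {p : H.Arr × H.Arr // H.s p.1 = H.r p.2})) :=
    Continuous.subtype_mk
      ((H.cont_i.comp (continuous_fst.comp continuous_subtype_val)).prodMk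
        (continuous_snd.comp continuous_subtype_val)) _
  exact Continuous.subtype_mk
    ((continuous_fst.comp continuous_subtype_val).prodMk (H.cont_m.comp hinner)) _

lemma thetaInv_thetaMap (H : TopGroupoid) (p : {p : H.Arr × H.Arr // H.s p.1 = H.r p.2}) :
    thetaInv H (thetaMap H p) = p := by
  obtain ⟨⟨g, h⟩, hc⟩ := p
  apply Subtype.ext
  show ((g, H.m (H.i g) (H.m g h)) : H.Arr × H.Arr) = (g, h)
  rw [Prod.mk.injEq]
  refine ⟨rfl, ?_⟩
  rw [← H.m_assoc _ _ _ (H.s_i g) hc, H.i_m]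
  have : H.u (H.s g) = H.u (H.r h) := by rw [hc]
  rw [this, H.u_m]

lemma thetaMap_thetaInv (H : TopGroupoid) (q : {q : H.Arr × H.Arr // H.r q.1 = H.r q.2}) :
    thetaMap H (thetaInv H q) = q := by
  obtain ⟨⟨h₁, h₂⟩, hr⟩ := q
  apply Subtype.ext
  show ((h₁, H.m h₁ (H.m (H.i h₁) h₂)) : H.Arr × H.Arr) = (h₁, h₂)
  rw [Prod.mk.injEq]
  refine ⟨rfl, ?_⟩
  rw [← H.m_assoc _ _ _ (H.r_i h₁).symm (by rw [H.s_i]; exact hr), H.m_i]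
  have : H.u (H.r h₁) = H.u (H.r h₂) := by rw [hr]
  rw [this, H.u_m]

lemma thetaMap_isOpenMap (H : TopGroupoid) : IsOpenMap (thetaMap H) := by
  intro U hU
  have : thetaMap H '' U = thetaInv H ⁻¹' U := by
    ext q
    constructor
    · rintro ⟨p, hp, rfl⟩
      show thetaInv H (thetaMap H p) ∈ U
      rw [thetaInv_thetaMap]; exact hp
    · intro hq
      exact ⟨thetaInv H q, hq, thetaMap_thetaInv H q⟩
  rw [this]
  exact hU.preimage (thetaInv_continuous H)

end Aux

/-- for a fibration with Hausdorff object spaces: if `H¹` is Hausdorff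
then `G¹` is closed in `L¹`; conversely if `F⁰` is an open surjection and `G¹` is
closed in `L¹`, then `H¹` is Hausdorff. -/
theorem fibre_closed_iff_base_Hausdorff (L H : TopGroupoid) (F : ContFunctor L H)
    (hF : IsFibration F) (hL0 : T2Space L.Obj) (hH0 : T2Space H.Obj) :
    (T2Space H.Arr → IsClosed (fibreArr F)) ∧
    ((Function.Surjective F.obj ∧ IsOpenMap F.obj) → IsClosed (fibreArr F) →
      T2Space H.Arr) := by
  obtain ⟨hsurj, hopen⟩ := hF
  constructor
  · intro hT2
    exact isClosed_eq F.cont_arr (H.cont_u.comp (F.cont_obj.comp L.cont_s))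
  · rintro ⟨hOsurj, hOopen⟩ hG
    rw [t2_iff_isClosed_diagonal]
    have hWclosed : IsClosed {q : H.Arr × H.Arr | H.r q.1 = H.r q.2} :=
      isClosed_eq (H.cont_r.comp continuous_fst) (H.cont_r.comp continuous_snd)
    set Φ : {p : L.Arr × L.Arr // L.s p.1 = L.r p.2} →
        {q : H.Arr × H.Arr // H.r q.1 = H.r q.2} :=
      fun p => thetaMap H (psiMap F p) with hΦ
    have hΦopen : IsOpenMap Φ :=
      (thetaMap_isOpenMap H).comp (psiMap_isOpenMap F hopen hOopen)
    have hΦsurj : Function.Surjective Φ := by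
      rintro ⟨⟨h₁, h₂⟩, hr⟩
      obtain ⟨x, hx⟩ := hOsurj (H.s h₂)
      have hr' : H.r h₁ = H.r h₂ := hr
      have hcomp1 : H.s (H.i h₁) = H.r h₂ := by rw [H.s_i]; exact hr'
      have hs : H.s (H.m (H.i h₁) h₂) = F.obj x := by rw [H.s_m _ _ hcomp1, hx]
      obtain ⟨k, hk⟩ := hsurj ⟨(H.m (H.i h₁) h₂, x), hs⟩
      have hFk : F.arr k = H.m (H.i h₁) h₂ := congrArg (fun q => q.1.1) hk
      have hfib1 : H.s h₁ = F.obj (L.r k) := by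
        rw [← F.r_arr, hFk, H.r_m _ _ hcomp1, H.r_i]
      obtain ⟨l₁, hl₁⟩ := hsurj ⟨(h₁, L.r k), hfib1⟩
      have hFl₁ : F.arr l₁ = h₁ := congrArg (fun q => q.1.1) hl₁
      have hsl₁ : L.s l₁ = L.r k := congrArg (fun q => q.1.2) hl₁
      refine ⟨⟨(l₁, k), hsl₁⟩, ?_⟩
      apply Subtype.ext
      show ((F.arr l₁, H.m (F.arr l₁) (F.arr k)) : H.Arr × H.Arr) = (h₁, h₂)
      rw [Prod.mk.injEq]
      refine ⟨hFl₁, ?_⟩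
      rw [hFl₁, hFk, ← H.m_assoc _ _ _ (H.r_i h₁).symm hcomp1, H.m_i]
      rw [show H.u (H.r h₁) = H.u (H.r h₂) from by rw [hr'], H.u_m]
    have hpre : Φ ⁻¹' (Subtype.val ⁻¹' Set.diagonal H.Arr) =
        (fun p : {p : L.Arr × L.Arr // L.s p.1 = L.r p.2} => p.1.2) ⁻¹' fibreArr F := by
      ext ⟨⟨l₁, k⟩, hc⟩
      simp only [Set.mem_preimage, Set.mem_diagonal_iff]
      show F.arr l₁ = H.m (F.arr l₁) (F.arr k) ↔ k ∈ fibreArr F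
      have hc2 : L.s l₁ = L.r k := hc
      have hc' : H.s (F.arr l₁) = H.r (F.arr k) := by
        rw [F.s_arr, F.r_arr, hc2]
      rw [eq_comm, H.m_eq_left_iff _ _ hc']
      show F.arr k = H.u (H.s (F.arr l₁)) ↔ F.arr k = H.u (F.obj (L.s k))
      constructor
      · intro e
        have h2 : F.obj (L.s k) = H.s (F.arr l₁) := by
          rw [← F.s_arr, e, H.s_u]
        rw [e, h2]
      · intro e
        have h2 : H.s (F.arr l₁) = F.obj (L.s k) := by
          rw [hc', e, H.r_u]
        rw [e, h2]
    have hΔ' : IsClosed ((Subtype.val :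
        {q : H.Arr × H.Arr // H.r q.1 = H.r q.2} → H.Arr × H.Arr) ⁻¹'
          Set.diagonal H.Arr) := by
      apply closed_of_preimage_closed hΦsurj hΦopen
      rw [hpre]
      exact hG.preimage (continuous_snd.comp continuous_subtype_val)
    have himg : Set.diagonal H.Arr = Subtype.val '' ((Subtype.val :
        {q : H.Arr × H.Arr // H.r q.1 = H.r q.2} → H.Arr × H.Arr) ⁻¹'
          Set.diagonal H.Arr) := by
      ext q
      constructor
      · intro hq
        have hrq : H.r q.1 = H.r q.2 := by rw [Set.mem_diagonal_iff.mp hq]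
        exact ⟨⟨q, hrq⟩, hq, rfl⟩
      · rintro ⟨⟨q', hq'⟩, hmem, rfl⟩
        exact hmem
    rw [himg]
    exact hWclosed.isClosedEmbedding_subtypeVal.isClosedMap _ hΔ'
end

section
/- Let H be a topological groupoid with Hausdorff object space H⁰ and non-Hausdorff arrow space H¹, and let G be a topological groupoid carrying a classical action of H whose anchor map r_H : G⁰ → H⁰ is an open surjection. Then the arrow space H¹ ×_{s,H⁰,r_H} G¹ of the transformation groupoid H ⋉ G is not Hausdorff. (Consequently, such a classical action can never have a transformation groupoid with Hausdorff arrow space; this yields the paper's Proposition that a non-Hausdorff, locally Hausdorff groupoid H admits no classical action on a groupoid G with Hausdorff object space, open surjective anchor map, G equivalent to the space H¹ and transformation groupoid equivalent to H⁰, since these equivalences would force the arrow spaces of G and of H ⋉ G to be Hausdorff.) -/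
/-- A classical action of a topological groupoid `H` on a topological groupoid `G`:
continuous actions of `H` on the spaces `G⁰` and `G¹` (with anchor maps `ρ` and
`ρ ∘ r = ρ ∘ s`) such that `r`, `s` and the multiplication of `G` are
`H`-equivariant. -/
structure ClassicalAction (H G : TopGroupoid) where
  ρ : G.Obj → H.Obj
  cont_ρ : Continuous ρ
  ρ_r_s : ∀ g : G.Arr, ρ (G.r g) = ρ (G.s g)
  act₀ : H.Arr → G.Obj → G.Obj
  act₁ : H.Arr → G.Arr → G.Arr
  cont_act₀ : Continuous
    (fun p : {p : H.Arr × G.Obj // H.s p.1 = ρ p.2} => act₀ p.1.1 p.1.2)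
  cont_act₁ : Continuous
    (fun p : {p : H.Arr × G.Arr // H.s p.1 = ρ (G.r p.2)} => act₁ p.1.1 p.1.2)
  ρ_act₀ : ∀ h x, H.s h = ρ x → ρ (act₀ h x) = H.r h
  u_act₀ : ∀ x, act₀ (H.u (ρ x)) x = x
  m_act₀ : ∀ h₁ h₂ x, H.s h₁ = H.r h₂ → H.s h₂ = ρ x →
    act₀ (H.m h₁ h₂) x = act₀ h₁ (act₀ h₂ x)
  r_act₁ : ∀ h g, H.s h = ρ (G.r g) → G.r (act₁ h g) = act₀ h (G.r g)
  s_act₁ : ∀ h g, H.s h = ρ (G.r g) → G.s (act₁ h g) = act₀ h (G.s g)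
  u_act₁ : ∀ g, act₁ (H.u (ρ (G.r g))) g = g
  m_act₁ : ∀ h₁ h₂ g, H.s h₁ = H.r h₂ → H.s h₂ = ρ (G.r g) →
    act₁ (H.m h₁ h₂) g = act₁ h₁ (act₁ h₂ g)
  mul_equivariant : ∀ h g₁ g₂, G.s g₁ = G.r g₂ → H.s h = ρ (G.r g₁) →
    act₁ h (G.m g₁ g₂) = G.m (act₁ h g₁) (act₁ h g₂)

/-- The arrow space `H¹ ×_{s,H⁰,r_H} G¹` of the transformation groupoid `H ⋉ G`
of a classical action (with the subspace topology). -/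
abbrev TransArr {H G : TopGroupoid} (A : ClassicalAction H G) : Type :=
  {p : H.Arr × G.Arr // H.s p.1 = A.ρ (G.r p.2)}

/-- if `H` has Hausdorff object space and non-Hausdorff arrow space,
and `H` acts classically on a topological groupoid `G` with open surjective anchor
map `r_H : G⁰ → H⁰`, then the arrow space `H¹ ×_{s,H⁰,r_H} G¹` of the transformation
groupoid `H ⋉ G` is not Hausdorff.  In particular no such classical action can model
the translation action of `H` on its arrow space. -/
theorem transformation_groupoid_arrows_not_Hausdorff (H G : TopGroupoid)
    (A : ClassicalAction H G)
    (hH0 : T2Space H.Obj) (hH1 : ¬ T2Space H.Arr)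
    (hsurj : Function.Surjective A.ρ) (hopen : IsOpenMap A.ρ) :
    ¬ T2Space (TransArr A) := by
  intro hT2
  apply hH1
  constructor
  intro h₁ h₂ hne
  by_cases hs : H.s h₁ = H.s h₂
  · -- same source: use the fibre product
    obtain ⟨x, hx⟩ := hsurj (H.s h₁)
    have hρ : ∀ h : H.Arr, H.s h = H.s h₁ → H.s h = A.ρ (G.r (G.u x)) := by
      intro h hh
      rw [G.r_u, hx, hh]
    set p₁ : TransArr A := ⟨(h₁, G.u x), hρ h₁ rfl⟩
    set p₂ : TransArr A := ⟨(h₂, G.u x), hρ h₂ hs.symm⟩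
    have hpne : p₁ ≠ p₂ := by
      intro hc
      apply hne
      have := congrArg (fun q : TransArr A => q.1.1) hc
      simpa [p₁, p₂] using this
    obtain ⟨U, V, hU, hV, hp1, hp2, hUV⟩ := t2_separation hpne
    obtain ⟨U', hU', hUeq⟩ := isOpen_induced_iff.mp hU
    obtain ⟨V', hV', hVeq⟩ := isOpen_induced_iff.mp hV
    have hp1' : ((h₁, G.u x) : H.Arr × G.Arr) ∈ U' := by
      rw [← hUeq] at hp1; exact hp1
    have hp2' : ((h₂, G.u x) : H.Arr × G.Arr) ∈ V' := by
      rw [← hVeq] at hp2; exact hp2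
    obtain ⟨U₁, U₂, hU₁, hU₂, hh₁U, huxU, hUsub⟩ :=
      isOpen_prod_iff.mp hU' h₁ (G.u x) hp1'
    obtain ⟨V₁, V₂, hV₁, hV₂, hh₂V, huxV, hVsub⟩ :=
      isOpen_prod_iff.mp hV' h₂ (G.u x) hp2'
    set W : Set H.Obj := A.ρ '' (G.r '' (U₂ ∩ V₂))
    have hWopen : IsOpen W := hopen _ (G.open_r _ (hU₂.inter hV₂))
    refine ⟨U₁ ∩ H.s ⁻¹' W, V₁ ∩ H.s ⁻¹' W, hU₁.inter (hWopen.preimage H.cont_s),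
      hV₁.inter (hWopen.preimage H.cont_s), ⟨hh₁U, ?_⟩, ⟨hh₂V, ?_⟩, ?_⟩
    · show H.s h₁ ∈ W
      exact ⟨G.r (G.u x), ⟨G.u x, ⟨huxU, huxV⟩, rfl⟩, (hρ h₁ rfl).symm⟩
    · show H.s h₂ ∈ W
      exact ⟨G.r (G.u x), ⟨G.u x, ⟨huxU, huxV⟩, rfl⟩, (hρ h₂ hs.symm).symm⟩
    · rw [Set.disjoint_left]
      rintro h ⟨hhU₁, hhW⟩ ⟨hhV₁, hhW'⟩
      obtain ⟨y, ⟨g, hg, hgy⟩, hyW⟩ := hhW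
      have hmem : H.s h = A.ρ (G.r g) := by rw [← hgy] at hyW; exact hyW.symm
      set q : TransArr A := ⟨(h, g), hmem⟩
      have hqU : q ∈ U := by
        rw [← hUeq]; exact hUsub ⟨hhU₁, hg.1⟩
      have hqV : q ∈ V := by
        rw [← hVeq]; exact hVsub ⟨hhV₁, hg.2⟩
      exact Set.disjoint_left.mp hUV hqU hqV
  · -- different sources: separate in H.Obj
    obtain ⟨U, V, hU, hV, h1U, h2V, hUV⟩ := t2_separation hs
    exact ⟨H.s ⁻¹' U, H.s ⁻¹' V, hU.preimage H.cont_s, hV.preimage H.cont_s,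
      h1U, h2V, hUV.preimage H.s⟩
end
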